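/- arXiv:math/0204300 — 2 statements merged into one kernel-verified Lean document; each statement's English description precedes it below -/
import Mathlib

section
/- Let ε > 0 and set δ := √(1 + ε²/(4(1+ε))) − 1 > 0. Then for every n ≥ 1 and every choice of Schur parameters a_1, …, a_n with |a_j| ≠ 1 and | |a_j| − 1 | < δ for all 1 ≤ j ≤ n, every zero z ∈ ℂ of φ_n satisfies | |z| − 1 | < ε. -/
open LaurentPolynomial Polynomial Complex ComplexConjugate

noncomputable section

/-- Reversed polynomial with conjugated coefficients: p*(z) = Σ conj(c_{m-k}) z^k. -/
def revc (p : Polynomial ℂ) : Polynomial ℂ := (p.map (starRingEnd ℂ)).reverse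

/-- Monic orthogonal polynomials from Schur parameters: φ_0 = 1,
φ_n = z φ_{n-1} + a_n φ*_{n-1}. -/
def phi (a : ℕ → ℂ) : ℕ → Polynomial ℂ
  | 0 => 1
  | n + 1 => X * phi a n + Polynomial.C (a (n + 1)) * revc (phi a n)

/-- ρ_n := |1 - |a_n|²|^{1/2}. -/
def rho (a : ℕ → ℂ) (n : ℕ) : ℝ := Real.sqrt |1 - ‖a n‖ ^ 2|

/-- ε_n := sgn (1 - |a_n|²). -/
def sgn (a : ℕ → ℂ) (n : ℕ) : ℝ := Real.sign (1 - ‖a n‖ ^ 2)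

/-- ρ̂_n := ε_n ρ_n. -/
def rhoh (a : ℕ → ℂ) (n : ℕ) : ℝ := sgn a n * rho a n

/-- κ_n := Π_{k=1}^n ρ_k⁻¹ (κ_0 = 1). -/
def kap (a : ℕ → ℂ) (n : ℕ) : ℝ := ∏ k ∈ Finset.Icc 1 n, (rho a k)⁻¹

/-- e_n := Π_{k=1}^n ε_k (e_0 = 1). -/
def esgn (a : ℕ → ℂ) (n : ℕ) : ℝ := ∏ k ∈ Finset.Icc 1 n, sgn a k

/-- Orthonormal polynomials φ̂_n := κ_n φ_n. -/
def phin (a : ℕ → ℂ) (n : ℕ) : Polynomial ℂ := Polynomial.C ((kap a n : ℝ) : ℂ) * phi a n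

/-- Standard right orthonormal Laurent polynomials:
χ_{2m} = z^{-m} φ̂*_{2m}, χ_{2m+1} = z^{-m} φ̂_{2m+1}. -/
def chi (a : ℕ → ℂ) (n : ℕ) : LaurentPolynomial ℂ :=
  T (-((n / 2 : ℕ) : ℤ)) * (if Even n then revc (phin a n) else phin a n).toLaurent

/-- The kernel K_n(z,y) := Σ_{k=0}^n e_k φ̂_k(z) conj(φ̂_k(y)). -/
def Kker (a : ℕ → ℂ) (n : ℕ) (z y : ℂ) : ℂ :=
  ∑ k ∈ Finset.range (n + 1),
    ((esgn a k : ℝ) : ℂ) * (phin a k).eval z * conj ((phin a k).eval y)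

/-- Entries of the five-diagonal matrix, with rows/columns indexed from 1. -/
def Fent (a : ℕ → ℂ) (i j : ℕ) : ℂ :=
  if i = 1 then
    if j = 1 then -a 1 else if j = 2 then (rho a 1 : ℂ) else 0
  else if i % 2 = 0 then
    if j + 1 = i then -(rhoh a (i - 1) : ℂ) * a i
    else if j = i then -conj (a (i - 1)) * a i
    else if j = i + 1 then -(rho a i : ℂ) * a (i + 1)
    else if j = i + 2 then (rho a i : ℂ) * (rho a (i + 1) : ℂ)
    else 0
  else
    if j + 2 = i then (rhoh a (i - 2) : ℂ) * (rhoh a (i - 1) : ℂ)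
    else if j + 1 = i then conj (a (i - 2)) * (rhoh a (i - 1) : ℂ)
    else if j = i then -conj (a (i - 1)) * a i
    else if j = i + 1 then conj (a (i - 1)) * (rho a i : ℂ)
    else 0

/-- The n×n five-diagonal matrix ℱ_n. -/
def Fmat (a : ℕ → ℂ) (n : ℕ) : Matrix (Fin n) (Fin n) ℂ :=
  Matrix.of fun i j => Fent a (i.val + 1) (j.val + 1)

/-- Evaluation of a Laurent polynomial at a nonzero complex number. -/
def levalAt (z : ℂ) (f : LaurentPolynomial ℂ) : ℂ :=
  Finsupp.sum f.coeff fun k c => c * z ^ k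

/-!
Write `F k = φ_k(z)` and `G k = φ*_k(z)`. Then `F (k+1) = z F k + a_{k+1} G k`,
`G (k+1) = G k + conj a_{k+1} z F k`, and
`|G (k+1)|² - |F (k+1)|² = (1 - |a_{k+1}|²) (|G k|² - |z|² |F k|²)`.
For `R = |z| ≥ 1 + ε` and `|a_k| ≤ τ := 1 + δ`, this identity shows that the cone
`F ≠ 0, |G| ≤ μ |F|` with `μ = (R + 1) / (2τ)` is preserved by every step, so `φ_n(z) ≠ 0`.
For `0 < |z| ≤ 1 - ε`, the sequences `conj (G k) / z̄ᵏ` and `conj (F k) / z̄ᵏ` satisfy the same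
recursion at `1 / z̄`, and the lower bound `|a_n| > 1 - δ` then forbids `φ_n(z) = 0` at the
last step. Finally `φ_n(0) = a_n ≠ 0`.
-/

theorem natDegree_revc_le (p : ℂ[X]) : (revc p).natDegree ≤ p.natDegree :=
  (reverse_natDegree_le _).trans (natDegree_map_eq_of_injective (RingHom.injective _) p).le

theorem revc_eq_map_reflect (p : ℂ[X]) :
    revc p = (reflect p.natDegree p).map (starRingEnd ℂ) := by
  rw [revc, reverse, natDegree_map_eq_of_injective (RingHom.injective _), reflect_map]

theorem revc_one : revc 1 = 1 := by
  simp [revc_eq_map_reflect]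

theorem natDegree_X_mul_add_C_mul_revc {p : ℂ[X]} (hp : p ≠ 0) (c : ℂ) :
    (X * p + Polynomial.C c * revc p).natDegree = p.natDegree + 1 := by
  rw [natDegree_add_eq_left_of_natDegree_lt] <;> rw [natDegree_X_mul hp]
  exact Nat.lt_succ_of_le ((natDegree_C_mul_le _ _).trans (natDegree_revc_le p))

theorem revc_X_mul_add_C_mul_revc {p : ℂ[X]} (hp : p ≠ 0) (c : ℂ) :
    revc (X * p + Polynomial.C c * revc p) = revc p + Polynomial.C (conj c) * X * p := by
  set N := p.natDegree
  have hX : reflect (N + 1) (X * p) = reflect N p := by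
    rw [add_comm, reflect_mul _ _ natDegree_X_le le_rfl, reflect_one_X, one_mul]
  have hrevc : reflect (N + 1) (revc p) = (X * p).map (starRingEnd ℂ) := by
    rw [← mul_one (revc p), reflect_mul _ _ (natDegree_revc_le p) (by simp), reflect_one,
      revc_eq_map_reflect, reflect_map, reflect_reflect, Polynomial.map_mul, map_X, mul_comm,
      pow_one]
  rw [revc_eq_map_reflect, natDegree_X_mul_add_C_mul_revc hp, reflect_add, reflect_C_mul, hX,
    hrevc, Polynomial.map_add, Polynomial.map_mul, map_C, ← revc_eq_map_reflect, mul_assoc]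
  congr 2
  simp [Polynomial.map_map]

theorem phi_ne_zero (a : ℕ → ℂ) (n : ℕ) : phi a n ≠ 0 := by
  induction n with
  | zero => exact one_ne_zero
  | succ n ih =>
    refine ne_zero_of_natDegree_gt (n := 0) ?_
    rw [phi, natDegree_X_mul_add_C_mul_revc ih]
    exact Nat.succ_pos _

theorem sq_norm_sub_sq_norm_szego_step (z a F G : ℂ) :
    ‖G + conj a * z * F‖ ^ 2 - ‖z * F + a * G‖ ^ 2
      = (1 - ‖a‖ ^ 2) * (‖G‖ ^ 2 - ‖z‖ ^ 2 * ‖F‖ ^ 2) := by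
  simp only [Complex.sq_norm, normSq_apply, add_re, add_im, mul_re, mul_im, conj_re, conj_im]
  ring

theorem sq_sub_one_mul_le_of_quadratic_nonpos {R μ t f g : ℝ} (hf : 0 ≤ f) (hgf : g ≤ μ * f)
    (ht : 1 < t) (hμ : 0 ≤ μ) (hμR : μ ≤ R) (htμ : t * μ < R)
    (hq : t * μ ^ 2 - (R + 1) * μ + t * R ≤ 0) :
    (t ^ 2 - 1) * (R ^ 2 * f ^ 2 - g ^ 2) ≤ (μ ^ 2 - 1) * (R * f - t * g) ^ 2 := by
  have hdisc : 0 ≤ (μ ^ 2 - 1) * (R - t * μ) ^ 2 - (t ^ 2 - 1) * (R ^ 2 - μ ^ 2) := by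
    have : (μ ^ 2 - 1) * (R - t * μ) ^ 2 - (t ^ 2 - 1) * (R ^ 2 - μ ^ 2)
        = (μ * (R - t * μ) - (t * R - μ)) * (μ * (R - t * μ) + (t * R - μ)) := by ring
    rw [this]
    refine mul_nonneg (by linarith) (add_nonneg (mul_nonneg hμ (by linarith)) (by nlinarith))
  have hB : 0 ≤ 2 * R * (R - t * μ) * (t * R - μ) * f
      + (μ * f - g) * (t ^ 2 * (R ^ 2 - μ ^ 2) + (R - t * μ) ^ 2) := by
    have : 0 ≤ R ^ 2 - μ ^ 2 := by nlinarith
    have : 0 ≤ t * R - μ := by nlinarith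
    have : 0 ≤ R := by linarith
    positivity
  -- `(R - t μ)²` times the difference is the boundary case `g = μ f` times `(R f - t g)²`,
  -- plus a nonnegative multiple of `μ f - g`
  rw [← sub_nonneg]
  refine nonneg_of_mul_nonneg_right ?_ (by nlinarith : 0 < (R - t * μ) ^ 2)
  calc (0 : ℝ)
      ≤ ((μ ^ 2 - 1) * (R - t * μ) ^ 2 - (t ^ 2 - 1) * (R ^ 2 - μ ^ 2)) * (R * f - t * g) ^ 2
        + (t ^ 2 - 1) * (μ * f - g) * (2 * R * (R - t * μ) * (t * R - μ) * f
          + (μ * f - g) * (t ^ 2 * (R ^ 2 - μ ^ 2) + (R - t * μ) ^ 2)) := by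
        have : 0 ≤ t ^ 2 - 1 := by nlinarith
        have : 0 ≤ μ * f - g := by linarith
        positivity
    _ = _ := by ring

theorem szego_step_ne_zero_and_norm_le {z a F G : ℂ} {μ : ℝ} (hF : F ≠ 0) (hG : ‖G‖ ≤ μ * ‖F‖)
    (hμ : 1 ≤ μ) (hμz : μ ≤ ‖z‖) (haμ : ‖a‖ * μ < ‖z‖)
    (hq : 1 < ‖a‖ → ‖a‖ * μ ^ 2 - (‖z‖ + 1) * μ + ‖a‖ * ‖z‖ ≤ 0) :
    z * F + a * G ≠ 0 ∧ ‖G + conj a * z * F‖ ≤ μ * ‖z * F + a * G‖ := by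
  have hid := sq_norm_sub_sq_norm_szego_step z a F G
  set F' := z * F + a * G
  set G' := G + conj a * z * F
  have hf : 0 < ‖F‖ := norm_pos_iff.2 hF
  have hlow : ‖z‖ * ‖F‖ - ‖a‖ * ‖G‖ ≤ ‖F'‖ := by
    simpa only [norm_mul] using norm_sub_le_norm_add (z * F) (a * G)
  have hlow_pos : 0 < ‖z‖ * ‖F‖ - ‖a‖ * ‖G‖ := by
    nlinarith [mul_le_mul_of_nonneg_left hG (norm_nonneg a)]
  refine ⟨norm_pos_iff.1 (hlow_pos.trans_le hlow), le_of_sq_le_sq ?_ (by positivity)⟩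
  rcases le_or_gt ‖a‖ 1 with ha | ha
  · have hGz : ‖G‖ ≤ ‖z‖ * ‖F‖ := hG.trans (mul_le_mul_of_nonneg_right hμz hf.le)
    have : (1 - ‖a‖ ^ 2) * (‖G‖ ^ 2 - ‖z‖ ^ 2 * ‖F‖ ^ 2) ≤ 0 :=
      mul_nonpos_of_nonneg_of_nonpos (by nlinarith [norm_nonneg a]) (by nlinarith [norm_nonneg G])
    calc ‖G'‖ ^ 2 ≤ ‖F'‖ ^ 2 := by linarith
      _ ≤ (μ * ‖F'‖) ^ 2 := by
        rw [mul_pow]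
        exact le_mul_of_one_le_left (by positivity) (by nlinarith)
  · calc ‖G'‖ ^ 2 = ‖F'‖ ^ 2 + (‖a‖ ^ 2 - 1) * (‖z‖ ^ 2 * ‖F‖ ^ 2 - ‖G‖ ^ 2) := by linarith
      _ ≤ ‖F'‖ ^ 2 + (μ ^ 2 - 1) * (‖z‖ * ‖F‖ - ‖a‖ * ‖G‖) ^ 2 := by
        grw [sq_sub_one_mul_le_of_quadratic_nonpos hf.le hG ha (by linarith) hμz haμ (hq ha)]
      _ ≤ ‖F'‖ ^ 2 + (μ ^ 2 - 1) * ‖F'‖ ^ 2 := by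
        have : 0 ≤ μ ^ 2 - 1 := by nlinarith
        grw [hlow]
      _ = (μ * ‖F'‖) ^ 2 := by ring

/-- `schurBound ε = (2 + ε) / (2 √(1 + ε))` is the largest `τ` with `4 τ² R ≤ (R + 1)²` for all
`R ≥ 1 + ε`; the paper's `δ` is `schurBound ε - 1`. -/
def schurBound (ε : ℝ) : ℝ := √(1 + ε ^ 2 / (4 * (1 + ε)))

section schurBound

variable {ε : ℝ}

theorem sq_schurBound (hε : 0 ≤ ε) : schurBound ε ^ 2 = 1 + ε ^ 2 / (4 * (1 + ε)) :=
  Real.sq_sqrt (by positivity)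

theorem one_lt_schurBound (hε : 0 < ε) : 1 < schurBound ε :=
  (Real.lt_sqrt zero_le_one).2 <| by
    rw [one_pow]
    linarith [show 0 < ε ^ 2 / (4 * (1 + ε)) by positivity]

theorem four_mul_schurBound_sq_mul_le (hε : 0 ≤ ε) {R : ℝ} (hR : 1 + ε ≤ R) :
    4 * schurBound ε ^ 2 * R ≤ (R + 1) ^ 2 := by
  rw [sq_schurBound hε, ← sub_nonneg]
  have key : (R + 1) ^ 2 - 4 * (1 + ε ^ 2 / (4 * (1 + ε))) * R
      = (R - (1 + ε)) * ((1 + ε) * R - 1) / (1 + ε) := by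
    field_simp
    ring
  rw [key]
  have : 0 ≤ (1 + ε) * R - 1 := by nlinarith
  exact div_nonneg (mul_nonneg (by linarith) this) (by linarith)

theorem schurBound_sub_one_sq_le (hε : 0 ≤ ε) : (schurBound ε - 1) ^ 2 ≤ ε / 4 := by
  have h1 : 1 ≤ schurBound ε :=
    Real.one_le_sqrt.2 (by linarith [show 0 ≤ ε ^ 2 / (4 * (1 + ε)) by positivity])
  have h2 : ε ^ 2 / (4 * (1 + ε)) ≤ ε / 4 := by
    rw [div_le_div_iff₀ (by positivity) (by norm_num)]
    nlinarith
  nlinarith [sq_schurBound hε]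

end schurBound

structure SzegoRecursion (a : ℕ → ℂ) (z : ℂ) (F G : ℕ → ℂ) : Prop where
  F_zero : F 0 = 1
  G_zero : G 0 = 1
  F_succ (k : ℕ) : F (k + 1) = z * F k + a (k + 1) * G k
  G_succ (k : ℕ) : G (k + 1) = G k + conj (a (k + 1)) * z * F k

theorem szegoRecursion_phi (a : ℕ → ℂ) (z : ℂ) :
    SzegoRecursion a z (fun k ↦ (phi a k).eval z) (fun k ↦ (revc (phi a k)).eval z) where
  F_zero := eval_one
  G_zero := by simp only [phi, revc_one, eval_one]
  F_succ k := by simp only [phi, eval_add, eval_mul, eval_X, eval_C]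
  G_succ k := by
    simp only [phi, revc_X_mul_add_C_mul_revc (phi_ne_zero a k), eval_add, eval_mul, eval_X,
      eval_C]

namespace SzegoRecursion

variable {a : ℕ → ℂ} {z : ℂ} {F G : ℕ → ℂ}

theorem reflect (h : SzegoRecursion a z F G) (hz : z ≠ 0) :
    SzegoRecursion a (conj z)⁻¹ (fun k ↦ conj (G k) / conj z ^ k)
      (fun k ↦ conj (F k) / conj z ^ k) := by
  have hz' : conj z ≠ 0 := by simpa using hz
  constructor
  · simp [h.G_zero]
  · simp [h.F_zero]
  · intro k
    simp only [h.G_succ, map_add, map_mul, Complex.conj_conj]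
    field_simp
    ring
  · intro k
    simp only [h.F_succ, map_add, map_mul]
    field_simp
    ring

theorem F_succ_of_zero (h : SzegoRecursion a 0 F G) (k : ℕ) : F (k + 1) = a (k + 1) := by
  have hG : ∀ k, G k = 1 := fun k ↦ by
    induction k with
    | zero => exact h.G_zero
    | succ k ih => simp [h.G_succ, ih]
  simp [h.F_succ, hG]

theorem F_ne_zero_and_norm_G_le (h : SzegoRecursion a z F G) {τ : ℝ} (hz : 1 < ‖z‖) (hτ : 1 ≤ τ)
    (hdisc : 4 * τ ^ 2 * ‖z‖ ≤ (‖z‖ + 1) ^ 2) {n : ℕ} (ha : ∀ k < n, ‖a (k + 1)‖ ≤ τ) :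
    F n ≠ 0 ∧ ‖G n‖ ≤ (‖z‖ + 1) / (2 * τ) * ‖F n‖ := by
  set R := ‖z‖
  set μ := (R + 1) / (2 * τ)
  have hτμ : τ * μ = (R + 1) / 2 := by simp only [μ]; field_simp
  have hμ : 1 ≤ μ := by rw [le_div_iff₀ (by positivity)]; nlinarith
  have hμR : μ ≤ R := by rw [div_le_iff₀ (by positivity)]; nlinarith
  induction n with
  | zero => simp [h.F_zero, h.G_zero, hμ]
  | succ k ih =>
    obtain ⟨hF, hG⟩ := ih fun j hj ↦ ha j (by omega)
    have hak : ‖a (k + 1)‖ ≤ τ := ha k k.lt_succ_self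
    have haμ : ‖a (k + 1)‖ * μ ≤ (R + 1) / 2 := hτμ ▸ by gcongr
    rw [h.F_succ, h.G_succ]
    refine szego_step_ne_zero_and_norm_le hF hG hμ hμR (by linarith) fun _ ↦ ?_
    -- `μ` is the vertex of `τ x² - (R + 1) x + τ R`, which is nonpositive there by `hdisc`
    have hvertex : 4 * τ * (τ * μ ^ 2 - (R + 1) * μ + τ * R) = 4 * τ ^ 2 * R - (R + 1) ^ 2 := by
      linear_combination (4 * (τ * μ) - 2 * (R + 1)) * hτμ
    show ‖a (k + 1)‖ * μ ^ 2 - (R + 1) * μ + ‖a (k + 1)‖ * R ≤ 0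
    nlinarith [mul_le_mul_of_nonneg_right hak (by positivity : 0 ≤ μ ^ 2 + R)]

theorem G_succ_ne_zero (h : SzegoRecursion a z F G) {k : ℕ} {μ : ℝ} (hF : F k ≠ 0)
    (hG : ‖G k‖ ≤ μ * ‖F k‖) (hμ : μ < ‖a (k + 1)‖ * ‖z‖) : G (k + 1) ≠ 0 := by
  rw [h.G_succ]
  intro h0
  have : ‖a (k + 1)‖ * ‖z‖ * ‖F k‖ = ‖G k‖ := by
    rw [← Complex.norm_conj (a (k + 1)), ← norm_mul, ← norm_mul, eq_neg_of_add_eq_zero_right h0,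
      norm_neg]
  nlinarith [norm_pos_iff.2 hF]

variable {ε : ℝ} {n : ℕ}

theorem F_ne_zero_of_one_add_le_norm (h : SzegoRecursion a z F G) (hε : 0 < ε)
    (hz : 1 + ε ≤ ‖z‖) (ha : ∀ k < n, ‖a (k + 1)‖ ≤ schurBound ε) : F n ≠ 0 :=
  (h.F_ne_zero_and_norm_G_le (by linarith) (one_lt_schurBound hε).le
    (four_mul_schurBound_sq_mul_le hε.le hz) ha).1

theorem F_ne_zero_of_norm_le_one_sub (h : SzegoRecursion a z F G) (hε : 0 < ε)
    (hz : ‖z‖ ≤ 1 - ε) (hn : n ≠ 0) (ha : ∀ k < n, |‖a (k + 1)‖ - 1| < schurBound ε - 1) :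
    F n ≠ 0 := by
  obtain ⟨m, rfl⟩ := Nat.exists_eq_succ_of_ne_zero hn
  have hδ := schurBound_sub_one_sq_le hε.le
  have ham := (abs_lt.1 (ha m m.lt_succ_self)).1
  rcases eq_or_ne z 0 with rfl | hz0
  · rw [h.F_succ_of_zero]
    rw [norm_zero] at hz
    intro h0
    rw [h0, norm_zero] at ham
    nlinarith
  · have hR : ‖(conj z)⁻¹‖ = ‖z‖⁻¹ := by rw [norm_inv, Complex.norm_conj]
    have hz' : 0 < ‖z‖ := norm_pos_iff.2 hz0
    have hRε : 1 ≤ (1 - ε) * ‖(conj z)⁻¹‖ := by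
      rw [hR, ← div_eq_mul_inv, one_le_div hz']
      exact hz
    have hR1 : 1 + ε ≤ ‖(conj z)⁻¹‖ := by nlinarith
    obtain ⟨hP, hQ⟩ := (h.reflect hz0).F_ne_zero_and_norm_G_le (n := m) (by linarith)
      (one_lt_schurBound hε).le (four_mul_schurBound_sq_mul_le hε.le hR1)
      fun k hk ↦ by linarith [(abs_lt.1 (ha k (by omega))).2]
    have hμ : (‖(conj z)⁻¹‖ + 1) / (2 * schurBound ε) < ‖a (m + 1)‖ * ‖(conj z)⁻¹‖ := by
      have hτ1 := one_lt_schurBound hε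
      have : (2 - schurBound ε) * ‖(conj z)⁻¹‖ < ‖a (m + 1)‖ * ‖(conj z)⁻¹‖ :=
        mul_lt_mul_of_pos_right (by linarith) (by linarith)
      -- `τ (2 - τ) = 1 - (τ - 1)² ≥ 1 - ε / 4` and `(1 - ε) R ≥ 1`, where `τ = schurBound ε`
      rw [div_lt_iff₀ (by positivity)]
      nlinarith
    simpa [hz0] using (h.reflect hz0).G_succ_ne_zero hP hQ hμ

end SzegoRecursion

/-- Theorem 4.2: for ε > 0 and δ := √(1 + ε²/(4(1+ε))) − 1, we have
δ > 0 and: whenever the Schur parameters a₁,…,a_n satisfy ||a_j| − 1| < δ, every zero z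
of φ_n satisfies ||z| − 1| < ε. -/
theorem zeros_near_circle (ε : ℝ) (hε : 0 < ε) :
    0 < Real.sqrt (1 + ε ^ 2 / (4 * (1 + ε))) - 1 ∧
    ∀ (n : ℕ), 1 ≤ n → ∀ a : ℕ → ℂ,
      (∀ j, 1 ≤ j → j ≤ n → ‖a j‖ ≠ 1) →
      (∀ j, 1 ≤ j → j ≤ n →
        |‖a j‖ - 1| < Real.sqrt (1 + ε ^ 2 / (4 * (1 + ε))) - 1) →
      ∀ z : ℂ, (phi a n).eval z = 0 → |‖z‖ - 1| < ε := by
  refine ⟨sub_pos.2 (one_lt_schurBound hε), fun n hn a _ ha z hz ↦ ?_⟩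
  have hrec := szegoRecursion_phi a z
  have ha' : ∀ k < n, |‖a (k + 1)‖ - 1| < schurBound ε - 1 :=
    fun k hk ↦ ha (k + 1) (by omega) hk
  rw [abs_sub_lt_iff]
  constructor
  · by_contra! hz'
    exact hrec.F_ne_zero_of_one_add_le_norm hε (by linarith)
      (fun k hk ↦ by linarith [(abs_lt.1 (ha' k hk)).2]) hz
  · by_contra! hz'
    exact hrec.F_ne_zero_of_norm_le_one_sub hε (by linarith) (by omega) ha' hz
end
end

section
/- Fix n ≥ 1, an index 1 ≤ k ≤ n, and Schur parameters a_1, …, a_n with |a_j| ≠ 1. For t ∈ ℝ set a_j(t) := a_j for j ≠ k and a_k(t) := e^{it} a_k; let φ_j^t be the monic polynomials generated by the recurrence with parameters a_j(t), and φ̂_j^t := κ_j φ_j^t (the quantities ρ_j, ε_j, κ_j, e_j are unchanged by the perturbation since |a_j(t)| = |a_j|), and K_{n−1}^t(z,y) := Σ_{j=0}^{n−1} e_j φ̂_j^t(z) conj(φ̂_j^t(y)). Let I ⊆ ℝ be an open interval and λ : I → ℂ differentiable with φ_n^t(λ(t)) = 0 and λ(t) ≠ 0 for all t ∈ I. Then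 for all t ∈ I: K_{n−1}^t(λ(t), conj(λ(t))^{−1}) · λ'(t) = −i · λ(t)^{1−k} · [ e_{k−1} a_k(t) (φ̂*_{k−1}(λ(t)))² + e_k conj(a_k(t)) (φ̂_k^t(λ(t)))² ], where φ̂*_{k−1} = φ̂*_{k−1} is t-independent because the parameters a_1, …, a_{k−1} are not perturbed. -/
open LaurentPolynomial Polynomial Complex ComplexConjugate

noncomputable section

/-- Orthonormal polynomials for the perturbed parameters `b`, with the normalization
constants κ_j taken from the unperturbed parameters `a` (they are unchanged by a
rotation of the parameters). -/
def phinPert (a b : ℕ → ℂ) (j : ℕ) : Polynomial ℂ :=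
  Polynomial.C ((kap a j : ℝ) : ℂ) * phi b j

/-- The perturbed kernel K_m(z,y) = Σ_{j=0}^m e_j φ̂_j^t(z) conj(φ̂_j^t(y)), with e_j taken
from the unperturbed parameters. -/
def KkerPert (a b : ℕ → ℂ) (m : ℕ) (z y : ℂ) : ℂ :=
  ∑ j ∈ Finset.range (m + 1),
    ((esgn a j : ℝ) : ℂ) * (phinPert a b j).eval z * conj ((phinPert a b j).eval y)

/-- Rotation of the k-th Schur parameter: a_k ↦ e^{it} a_k, the others unchanged. -/
def aRot1 (a : ℕ → ℂ) (k : ℕ) (t : ℝ) : ℕ → ℂ :=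
  fun j => if j = k then Complex.exp (Complex.I * t) * a k else a j

/-!
Along a path `t ↦ (b(t), λ(t))` write `φ_j, φ*_j` for the values at `λ(t)` and
`W_j = φ_j' φ*_j - φ*_j' φ_j` for their Wronskian in `t`. The Szegő recursion gives
`W_{j+1} = (1 - |b_{j+1}|²) (λ' φ_j φ*_j + λ W_j) + s_j`, where `s_j` only involves the derivative
of `b_{j+1}`. Since `e_j κ_j² = ∏_{l ≤ j} (1 - |b_l|²)⁻¹`, dividing by `λ^j / (e_j κ_j²)` makes the
recursion telescope, and as `φ*_j(λ) = λ^j conj φ_j(1 / conj λ)` the telescoped `λ'` terms add up to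
`λ' K_{n-1}(λ, 1 / conj λ) / λ`. At a zero of `φ_n` we have `W_n = 0`, and when only `b_k`
rotates, only `s_{k-1}` survives.
-/

lemma revc_eq_reflect_map (p : ℂ[X]) : revc p = reflect p.natDegree (p.map (starRingEnd ℂ)) := by
  rw [revc, reverse, natDegree_map_eq_of_injective (RingHom.injective _)]

lemma map_revc (p : ℂ[X]) : (revc p).map (starRingEnd ℂ) = reflect p.natDegree p := by
  rw [revc_eq_reflect_map, ← reflect_map, map_map, RingHomCompTriple.comp_eq, Polynomial.map_id]

lemma revc_C_mul (r : ℂ) (p : ℂ[X]) :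
    revc (Polynomial.C r * p) = Polynomial.C (conj r) * revc p := by
  rcases eq_or_ne r 0 with rfl | hr
  · simp [revc]
  · rw [revc_eq_reflect_map, revc_eq_reflect_map, natDegree_C_mul hr, Polynomial.map_mul,
      Polynomial.map_C, reflect_C_mul]

lemma eval_revc (p : ℂ[X]) {z : ℂ} (hz : z ≠ 0) :
    (revc p).eval z = z ^ p.natDegree * conj (p.eval (conj z)⁻¹) := by
  have : Invertible z⁻¹ := invertibleOfNonzero (inv_ne_zero hz)
  have h := eval₂_reflect_mul_pow (RingHom.id ℂ) z⁻¹ p.natDegree (p.map (starRingEnd ℂ))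
    natDegree_map_le
  rw [invOf_eq_inv, inv_inv, ← revc_eq_reflect_map, eval₂_id, eval₂_id,
    show z⁻¹ = conj (conj z)⁻¹ by simp, eval_map_apply, ← show z⁻¹ = conj (conj z)⁻¹ by simp,
    inv_pow] at h
  rw [← h]
  field_simp

lemma degree_phi (a : ℕ → ℂ) (j : ℕ) : (phi a j).degree = j := by
  induction j with
  | zero => simp [phi]
  | succ j ih =>
    have hlt : (Polynomial.C (a (j + 1)) * revc (phi a j)).degree < (X * phi a j).degree := by
      rw [mul_comm X, degree_mul_X, ih]
      calc (Polynomial.C (a (j + 1)) * revc (phi a j)).degree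
          ≤ (phi a j).natDegree := degree_le_natDegree.trans <| by
            exact_mod_cast (natDegree_C_mul_le _ _).trans <|
              (reverse_natDegree_le _).trans natDegree_map_le
        _ < j + 1 := by rw [natDegree_eq_of_degree_eq_some ih]; exact_mod_cast j.lt_succ_self
    rw [phi, degree_add_eq_left_of_degree_lt hlt, mul_comm X, degree_mul_X, ih]
    rfl

lemma natDegree_phi (a : ℕ → ℂ) (j : ℕ) : (phi a j).natDegree = j :=
  natDegree_eq_of_degree_eq_some (degree_phi a j)

lemma revc_phi_succ (a : ℕ → ℂ) (j : ℕ) :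
    revc (phi a (j + 1)) = revc (phi a j) + Polynomial.C (conj (a (j + 1))) * X * phi a j := by
  have hmap : ((phi a j).map (starRingEnd ℂ)).natDegree = j := by
    rw [natDegree_map_eq_of_injective (RingHom.injective _), natDegree_phi]
  rw [revc_eq_reflect_map, natDegree_phi, phi, Polynomial.map_add, Polynomial.map_mul,
    Polynomial.map_mul, Polynomial.map_X, Polynomial.map_C, map_revc, natDegree_phi,
    reflect_add, reflect_C_mul, add_comm j 1, reflect_mul _ _ natDegree_X.le hmap.le,
    ← one_mul (reflect j (phi a j)), reflect_mul _ _ (natDegree_one.trans_le (Nat.zero_le 1))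
      (natDegree_reflect_le.trans (by rw [natDegree_phi, max_self])),
    reflect_reflect, reflect_one_X, reflect_one, one_mul, pow_one,
    revc_eq_reflect_map (phi a j), natDegree_phi]
  ring

lemma phi_congr {a b : ℕ → ℂ} {j : ℕ} (h : ∀ i ∈ Finset.Icc 1 j, a i = b i) :
    phi a j = phi b j := by
  induction j with
  | zero => rfl
  | succ j ih =>
    rw [phi, phi, ih fun i hi => h i (Finset.Icc_subset_Icc_right j.le_succ hi),
      h (j + 1) (Finset.right_mem_Icc.2 (Nat.le_add_left 1 j))]

def schurDefect (a : ℕ → ℂ) (j : ℕ) : ℂ := ∏ l ∈ Finset.Icc 1 j, (1 - (‖a l‖ : ℂ) ^ 2)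

lemma schurDefect_congr {a b : ℕ → ℂ} (h : ∀ l, ‖a l‖ = ‖b l‖) :
    schurDefect a = schurDefect b := by
  funext j
  simp only [schurDefect, h]

lemma schurDefect_succ (a : ℕ → ℂ) (j : ℕ) :
    schurDefect a (j + 1) = schurDefect a j * (1 - (‖a (j + 1)‖ : ℂ) ^ 2) :=
  Finset.prod_Icc_succ_top (Nat.le_add_left 1 j) _

lemma one_sub_norm_sq_ne_zero {c : ℂ} (hc : ‖c‖ ≠ 1) : 1 - (‖c‖ : ℂ) ^ 2 ≠ 0 := by
  refine sub_ne_zero.2 fun h => hc ?_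
  exact (pow_eq_one_iff_of_nonneg (norm_nonneg _) two_ne_zero).1 (by exact_mod_cast h.symm)

lemma schurDefect_ne_zero {a : ℕ → ℂ} {n j : ℕ} (ha : ∀ l ∈ Finset.Icc 1 n, ‖a l‖ ≠ 1)
    (hj : j ≤ n) : schurDefect a j ≠ 0 :=
  Finset.prod_ne_zero_iff.2 fun l hl =>
    one_sub_norm_sq_ne_zero (ha l (Finset.Icc_subset_Icc_right hj hl))

lemma Real.sign_mul_inv_sqrt_abs_sq (x : ℝ) : x.sign * (√|x|)⁻¹ ^ 2 = x⁻¹ := by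
  rw [inv_pow, Real.sq_sqrt (abs_nonneg x)]
  rcases lt_trichotomy x 0 with hx | rfl | hx
  · rw [Real.sign_of_neg hx, abs_of_neg hx, inv_neg, neg_one_mul, neg_neg]
  · simp
  · rw [Real.sign_of_pos hx, abs_of_pos hx, one_mul]

lemma esgn_mul_kap_sq (a : ℕ → ℂ) (j : ℕ) :
    ((esgn a j : ℝ) : ℂ) * ((kap a j : ℝ) : ℂ) ^ 2 = (schurDefect a j)⁻¹ := by
  have h : esgn a j * kap a j ^ 2 = (∏ l ∈ Finset.Icc 1 j, (1 - ‖a l‖ ^ 2))⁻¹ := by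
    rw [esgn, kap, ← Finset.prod_pow, ← Finset.prod_mul_distrib, ← Finset.prod_inv_distrib]
    exact Finset.prod_congr rfl fun l _ => Real.sign_mul_inv_sqrt_abs_sq _
  rw [schurDefect]
  exact_mod_cast congrArg (fun x : ℝ => (x : ℂ)) h

lemma KkerPert_inv_conj (a b : ℕ → ℂ) (m : ℕ) {z : ℂ} (hz : z ≠ 0) :
    KkerPert a b m z (conj z)⁻¹ = ∑ j ∈ Finset.range (m + 1),
      (phi b j).eval z * (revc (phi b j)).eval z / (schurDefect a j * z ^ j) := by
  refine Finset.sum_congr rfl fun j _ => ?_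
  have hrev := eval_revc (phi b j) hz
  rw [natDegree_phi] at hrev
  simp only [phinPert, eval_mul, eval_C, map_mul, Complex.conj_ofReal, hrev]
  rw [div_eq_mul_inv, mul_inv, ← esgn_mul_kap_sq]
  field_simp

theorem div_prod_mul_pow_eq_sum_of_recurrence {K : Type*} [Field K] {d u s W : ℕ → K} {z w : K}
    (hz : z ≠ 0) {n : ℕ} (hd : ∀ j ∈ Finset.Icc 1 n, d j ≠ 0) (h0 : W 0 = 0)
    (hW : ∀ j < n, W (j + 1) = d (j + 1) * (w * u j + z * W j) + s j) :
    W n / ((∏ l ∈ Finset.Icc 1 n, d l) * z ^ n) =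
      ∑ j ∈ Finset.range n, (w * u j / ((∏ l ∈ Finset.Icc 1 j, d l) * z ^ (j + 1)) +
        s j / ((∏ l ∈ Finset.Icc 1 (j + 1), d l) * z ^ (j + 1))) := by
  induction n with
  | zero => simp [h0]
  | succ n ih =>
    have hD : ∏ l ∈ Finset.Icc 1 n, d l ≠ 0 :=
      Finset.prod_ne_zero_iff.2 fun l hl => hd l (Finset.Icc_subset_Icc_right n.le_succ hl)
    have hdn : d (n + 1) ≠ 0 := hd (n + 1) (Finset.right_mem_Icc.2 (Nat.le_add_left 1 n))
    rw [Finset.sum_range_succ, ← ih (fun j hj => hd j (Finset.Icc_subset_Icc_right n.le_succ hj))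
      (fun j hj => hW j (hj.trans n.lt_succ_self)), hW n n.lt_succ_self,
      Finset.prod_Icc_succ_top (Nat.le_add_left 1 n)]
    field_simp
    ring

-- The inhomogeneous term of `wronskianAlong_succ`: `β` is the derivative of the parameter `c`.
def variationSource (c β z u v : ℂ) : ℂ :=
  β * v ^ 2 - conj β * z ^ 2 * u ^ 2 + (conj c * β - conj β * c) * z * u * v

section Path

variable (b : ℝ → ℕ → ℂ) (lam : ℝ → ℂ)

def phiAlong (j : ℕ) (t : ℝ) : ℂ := (phi (b t) j).eval (lam t)

def phiRevAlong (j : ℕ) (t : ℝ) : ℂ := (revc (phi (b t) j)).eval (lam t)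

def wronskianAlong (j : ℕ) (t : ℝ) : ℂ :=
  deriv (phiAlong b lam j) t * phiRevAlong b lam j t -
    deriv (phiRevAlong b lam j) t * phiAlong b lam j t

lemma phiAlong_zero : phiAlong b lam 0 = 1 := by
  funext t
  simp [phiAlong, phi]

lemma phiRevAlong_zero : phiRevAlong b lam 0 = 1 := by
  funext t
  simp [phiRevAlong, phi, revc, reverse]

lemma phiAlong_succ (j : ℕ) :
    phiAlong b lam (j + 1) =
      fun t => lam t * phiAlong b lam j t + b t (j + 1) * phiRevAlong b lam j t := by
  funext t
  simp [phiAlong, phiRevAlong, phi]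

lemma phiRevAlong_succ (j : ℕ) :
    phiRevAlong b lam (j + 1) =
      fun t => phiRevAlong b lam j t + conj (b t (j + 1)) * (lam t * phiAlong b lam j t) := by
  funext t
  simp only [phiRevAlong, phiAlong, revc_phi_succ, eval_add, eval_mul, eval_C, eval_X]
  ring

variable {b lam} {b' : ℕ → ℂ} {t₀ : ℝ}

lemma differentiableAt_phiAlong (hlam : DifferentiableAt ℝ lam t₀)
    (hb : ∀ j, DifferentiableAt ℝ (fun t => b t j) t₀) (j : ℕ) :
    DifferentiableAt ℝ (phiAlong b lam j) t₀ ∧ DifferentiableAt ℝ (phiRevAlong b lam j) t₀ := by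
  induction j with
  | zero => simp [phiAlong_zero, phiRevAlong_zero]
  | succ j ih =>
    rw [phiAlong_succ, phiRevAlong_succ]
    obtain ⟨hφ, hψ⟩ := ih
    have hconj : DifferentiableAt ℝ (fun t => conj (b t (j + 1))) t₀ := (hb (j + 1)).star
    exact ⟨(hlam.mul hφ).add ((hb _).mul hψ), hψ.add (hconj.mul (hlam.mul hφ))⟩

lemma wronskianAlong_succ (hlam : DifferentiableAt ℝ lam t₀)
    (hb : ∀ j, HasDerivAt (fun t => b t j) (b' j) t₀) (j : ℕ) :
    wronskianAlong b lam (j + 1) t₀ =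
      (1 - (‖b t₀ (j + 1)‖ : ℂ) ^ 2) * (deriv lam t₀ * (phiAlong b lam j t₀ *
        phiRevAlong b lam j t₀) + lam t₀ * wronskianAlong b lam j t₀) +
      variationSource (b t₀ (j + 1)) (b' (j + 1)) (lam t₀) (phiAlong b lam j t₀)
        (phiRevAlong b lam j t₀) := by
  obtain ⟨hφ, hψ⟩ := differentiableAt_phiAlong hlam (fun j => (hb j).differentiableAt) j
  set φ := phiAlong b lam j
  set ψ := phiRevAlong b lam j
  set c := b t₀ (j + 1)
  set z := lam t₀
  set w := deriv lam t₀
  have hφ' : HasDerivAt (phiAlong b lam (j + 1))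
      (w * φ t₀ + z * deriv φ t₀ + (b' (j + 1) * ψ t₀ + c * deriv ψ t₀)) t₀ := by
    rw [phiAlong_succ]
    exact (hlam.hasDerivAt.mul hφ.hasDerivAt).add ((hb (j + 1)).mul hψ.hasDerivAt)
  have hψ' : HasDerivAt (phiRevAlong b lam (j + 1))
      (deriv ψ t₀ + (conj (b' (j + 1)) * (z * φ t₀) + conj c * (w * φ t₀ + z * deriv φ t₀)))
      t₀ := by
    rw [phiRevAlong_succ]
    exact hψ.hasDerivAt.add ((hb (j + 1)).star.mul (hlam.hasDerivAt.mul hφ.hasDerivAt))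
  rw [wronskianAlong, wronskianAlong, hφ'.deriv, hψ'.deriv, phiAlong_succ, phiRevAlong_succ,
    variationSource]
  linear_combination -(w * φ t₀ * ψ t₀ + z * (deriv φ t₀ * ψ t₀ - deriv ψ t₀ * φ t₀)) *
    Complex.mul_conj' c

theorem deriv_mul_sum_eq_of_phiAlong_eq_zero {n : ℕ} (hlam : DifferentiableAt ℝ lam t₀)
    (hb : ∀ j, HasDerivAt (fun t => b t j) (b' j) t₀) (hz : lam t₀ ≠ 0)
    (hnorm : ∀ j ∈ Finset.Icc 1 n, ‖b t₀ j‖ ≠ 1)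
    (hroot : phiAlong b lam n =ᶠ[nhds t₀] fun _ => 0) :
    deriv lam t₀ * ∑ j ∈ Finset.range n, phiAlong b lam j t₀ * phiRevAlong b lam j t₀ /
        (schurDefect (b t₀) j * lam t₀ ^ j) =
      -lam t₀ * ∑ j ∈ Finset.range n, variationSource (b t₀ (j + 1)) (b' (j + 1)) (lam t₀)
        (phiAlong b lam j t₀) (phiRevAlong b lam j t₀) /
          (schurDefect (b t₀) (j + 1) * lam t₀ ^ (j + 1)) := by
  set z := lam t₀
  set w := deriv lam t₀
  set u := fun j => phiAlong b lam j t₀ * phiRevAlong b lam j t₀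
  have hWn : wronskianAlong b lam n t₀ = 0 := by
    rw [wronskianAlong, hroot.deriv_eq, deriv_const, hroot.eq_of_nhds]
    ring
  have hW0 : wronskianAlong b lam 0 t₀ = 0 := by
    simp [wronskianAlong, phiAlong_zero, phiRevAlong_zero]
  have h : wronskianAlong b lam n t₀ / (schurDefect (b t₀) n * z ^ n) =
      ∑ j ∈ Finset.range n, (w * u j / (schurDefect (b t₀) j * z ^ (j + 1)) +
        variationSource (b t₀ (j + 1)) (b' (j + 1)) z (phiAlong b lam j t₀)
          (phiRevAlong b lam j t₀) / (schurDefect (b t₀) (j + 1) * z ^ (j + 1))) :=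
    div_prod_mul_pow_eq_sum_of_recurrence (d := fun l => 1 - (‖b t₀ l‖ : ℂ) ^ 2) (u := u)
      (W := fun j => wronskianAlong b lam j t₀) (s := fun j => variationSource (b t₀ (j + 1))
        (b' (j + 1)) z (phiAlong b lam j t₀) (phiRevAlong b lam j t₀)) hz
      (fun l hl => one_sub_norm_sq_ne_zero (hnorm l hl)) hW0
      (fun j _ => wronskianAlong_succ hlam hb j)
  have hsplit : ∑ j ∈ Finset.range n, w * u j / (schurDefect (b t₀) j * z ^ (j + 1)) =
      w * (∑ j ∈ Finset.range n, u j / (schurDefect (b t₀) j * z ^ j)) / z := by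
    rw [Finset.mul_sum, Finset.sum_div]
    refine Finset.sum_congr rfl fun j _ => ?_
    rw [pow_succ]
    ring
  rw [hWn, zero_div, Finset.sum_add_distrib, hsplit] at h
  field_simp at h
  linear_combination -h

end Path

lemma variationSource_zero (c z u v : ℂ) : variationSource c 0 z u v = 0 := by
  simp [variationSource]

lemma variationSource_I_mul (c z u v : ℂ) :
    variationSource c (I * c) z u v =
      I * (conj c * (z * u + c * v) ^ 2 + (1 - (‖c‖ : ℂ) ^ 2) * c * v ^ 2) := by
  simp only [variationSource, map_mul, conj_I]
  linear_combination (-I * c * v ^ 2) * Complex.mul_conj' c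

section Rotation

variable (a : ℕ → ℂ) (k : ℕ)

lemma norm_aRot1 (t : ℝ) (j : ℕ) : ‖aRot1 a k t j‖ = ‖a j‖ := by
  by_cases hj : j = k
  · simp [aRot1, hj, Complex.norm_exp]
  · simp [aRot1, hj]

lemma hasDerivAt_aRot1 (t₀ : ℝ) (j : ℕ) :
    HasDerivAt (fun t => aRot1 a k t j) (if j = k then I * aRot1 a k t₀ k else 0) t₀ := by
  by_cases hj : j = k
  · subst hj
    have h : HasDerivAt (fun t : ℝ => I * t) I t₀ := by
      simpa using ((hasDerivAt_id t₀).ofReal_comp).const_mul I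
    have hrot : (fun t => aRot1 a j t j) = fun t : ℝ => cexp (I * t) * a j := by
      funext t
      simp [aRot1]
    rw [hrot, if_pos rfl, congrFun hrot t₀]
    exact (h.cexp.mul_const (a j)).congr_deriv (by ring)
  · simp only [aRot1, hj, if_false]
    exact hasDerivAt_const t₀ (a j)

lemma phi_aRot1_of_lt (t : ℝ) {j : ℕ} (hj : j < k) : phi (aRot1 a k t) j = phi a j :=
  phi_congr fun i hi => by
    simp [aRot1, (show i ≠ k by have := (Finset.mem_Icc.1 hi).2; omega)]

end Rotation

theorem deriv_mul_sum_eq_of_phi_aRot1_eval_eq_zero (a : ℕ → ℂ) {n k : ℕ} (hk1 : 1 ≤ k)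
    (hkn : k ≤ n) (ha : ∀ j ∈ Finset.Icc 1 n, ‖a j‖ ≠ 1) {lam : ℝ → ℂ} {t₀ : ℝ}
    (hlam : DifferentiableAt ℝ lam t₀) (hz : lam t₀ ≠ 0)
    (hroot : ∀ᶠ t in nhds t₀, (phi (aRot1 a k t) n).eval (lam t) = 0) :
    deriv lam t₀ * ∑ j ∈ Finset.range n, (phi (aRot1 a k t₀) j).eval (lam t₀) *
        (revc (phi (aRot1 a k t₀) j)).eval (lam t₀) / (schurDefect a j * lam t₀ ^ j) =
      -I * lam t₀ ^ ((1 : ℤ) - k) *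
        (aRot1 a k t₀ k * (revc (phi a (k - 1))).eval (lam t₀) ^ 2 / schurDefect a (k - 1) +
          conj (aRot1 a k t₀ k) * (phi (aRot1 a k t₀) k).eval (lam t₀) ^ 2 / schurDefect a k) := by
  have key := deriv_mul_sum_eq_of_phiAlong_eq_zero hlam (hasDerivAt_aRot1 a k t₀) hz
    (by simpa only [norm_aRot1] using ha) hroot
  rw [schurDefect_congr (norm_aRot1 a k t₀)] at key
  conv_rhs at key =>
    rw [Finset.sum_eq_single_of_mem (k - 1) (Finset.mem_range.2 (by omega)) fun j _ hj => by
      rw [if_neg (by omega), variationSource_zero, zero_div],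
      Nat.sub_add_cancel hk1, if_pos rfl, variationSource_I_mul]
  set z := lam t₀
  set c := aRot1 a k t₀ k
  have hφk : (phi (aRot1 a k t₀) k).eval z =
      z * (phi a (k - 1)).eval z + c * (revc (phi a (k - 1))).eval z := by
    obtain ⟨j, rfl⟩ := Nat.exists_eq_add_of_le' hk1
    simp [phi, phi_aRot1_of_lt, c]
  have hDk : schurDefect a k = schurDefect a (k - 1) * (1 - (‖c‖ : ℂ) ^ 2) := by
    rw [norm_aRot1, ← Nat.sub_add_cancel hk1, schurDefect_succ, Nat.add_sub_cancel]
  have hD : schurDefect a (k - 1) ≠ 0 := schurDefect_ne_zero ha (by omega)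
  have hc : 1 - (‖c‖ : ℂ) ^ 2 ≠ 0 := by
    rw [norm_aRot1]; exact one_sub_norm_sq_ne_zero (ha k (Finset.mem_Icc.2 ⟨hk1, hkn⟩))
  simp only [phiAlong, phiRevAlong, phi_aRot1_of_lt a k t₀ (Nat.sub_lt hk1 one_pos)] at key
  rw [key, hφk, hDk, zpow_sub₀ hz, zpow_one, zpow_natCast]
  field_simp
  ring

theorem zero_variation_single_rotation_general
    (n k : ℕ) (hk1 : 1 ≤ k) (hkn : k ≤ n)
    (a : ℕ → ℂ) (ha : ∀ j, 1 ≤ j → j ≤ n → ‖a j‖ ≠ 1)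
    (α β : ℝ) (lam : ℝ → ℂ)
    (hdiff : ∀ t ∈ Set.Ioo α β, DifferentiableAt ℝ lam t)
    (hroot : ∀ t ∈ Set.Ioo α β, (phi (aRot1 a k t) n).eval (lam t) = 0)
    (hne : ∀ t ∈ Set.Ioo α β, lam t ≠ 0) :
    ∀ t ∈ Set.Ioo α β,
      KkerPert a (aRot1 a k t) (n - 1) (lam t) ((conj (lam t))⁻¹) * deriv lam t =
        -Complex.I * lam t ^ ((1 : ℤ) - k) *
          (((esgn a (k - 1) : ℝ) : ℂ) * aRot1 a k t k *
              ((revc (phin a (k - 1))).eval (lam t)) ^ 2 +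
            ((esgn a k : ℝ) : ℂ) * conj (aRot1 a k t k) *
              ((phinPert a (aRot1 a k t) k).eval (lam t)) ^ 2) := by
  intro t ht
  have key := deriv_mul_sum_eq_of_phi_aRot1_eval_eq_zero a hk1 hkn
    (fun j hj => ha j (Finset.mem_Icc.1 hj).1 (Finset.mem_Icc.1 hj).2) (hdiff t ht) (hne t ht)
    (Filter.eventually_of_mem (Ioo_mem_nhds ht.1 ht.2) hroot)
  rw [KkerPert_inv_conj _ _ _ (hne t ht), Nat.sub_add_cancel (hk1.trans hkn), mul_comm, key]
  simp only [phin, phinPert, revc_C_mul, eval_mul, eval_C, Complex.conj_ofReal]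
  rw [div_eq_mul_inv, div_eq_mul_inv, ← esgn_mul_kap_sq, ← esgn_mul_kap_sq]
  ring

/-- Theorem 4.5: variation of the nonzero zeros of the orthonormal
polynomials under rotation of the k-th Schur parameter. -/
theorem zero_variation_single_rotation
    (n k : ℕ) (hn : 1 ≤ n) (hk1 : 1 ≤ k) (hkn : k ≤ n)
    (a : ℕ → ℂ) (ha : ∀ j, 1 ≤ j → j ≤ n → ‖a j‖ ≠ 1)
    (α β : ℝ) (lam : ℝ → ℂ)
    (hdiff : ∀ t ∈ Set.Ioo α β, DifferentiableAt ℝ lam t)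
    (hroot : ∀ t ∈ Set.Ioo α β, (phi (aRot1 a k t) n).eval (lam t) = 0)
    (hne : ∀ t ∈ Set.Ioo α β, lam t ≠ 0) :
    ∀ t ∈ Set.Ioo α β,
      KkerPert a (aRot1 a k t) (n - 1) (lam t) ((conj (lam t))⁻¹) * deriv lam t =
        -Complex.I * lam t ^ ((1 : ℤ) - k) *
          (((esgn a (k - 1) : ℝ) : ℂ) * aRot1 a k t k *
              ((revc (phin a (k - 1))).eval (lam t)) ^ 2 +
            ((esgn a k : ℝ) : ℂ) * conj (aRot1 a k t k) *
              ((phinPert a (aRot1 a k t) k).eval (lam t)) ^ 2) :=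
  zero_variation_single_rotation_general n k hk1 hkn a ha α β lam hdiff hroot hne
end
end
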